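/- arXiv:2505.22329 — 2 statements merged into one kernel-verified Lean document; each statement's English description precedes it below -/
import Mathlib

section
/- Let H : ℝⁿ → [0,∞) be positive on nonzero vectors, convex, absolutely 1-homogeneous, C¹ away from 0, with dual H₀(ξ) = sup_{x ≠ 0} ⟨ξ, x⟩/H(x). Let p > 1, let u, v : ℝⁿ → ℝ be differentiable with u ≥ 0 and v > 0, and assume the gradients ∇u(x), ∇v(x) are nonzero where needed. Define L(u,v)(x) = H(∇u)^p + (p−1) H((u/v)∇v)^p − p H((u/v)∇v)^{p−1} ⟨∇H(∇v), ∇u⟩. Then L(u,v)(x) ≥ 0 at every point x. -/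
/-!
Since `H` is convex and positively homogeneous it is subadditive, so every directional derivative
of `H` at a point is bounded by the value of `H` in that direction: `⟨∇H(z), w⟩ ≤ H(w)`.
With `a = H(∇u)` and `b = H((u/v)∇v)` the expression is therefore at least
`a^p + (p-1) b^p - p b^(p-1) a`, which is nonnegative by Young's inequality with exponents
`p` and `p/(p-1)`.
-/

open Filter Topology Set

theorem ConvexOn.map_add_le_of_pos_homogeneous {E : Type*} [AddCommGroup E] [Module ℝ E]
    {H : E → ℝ} (hconvex : ConvexOn ℝ univ H)
    (hhom : ∀ t : ℝ, 0 < t → ∀ x, H (t • x) = t * H x) (a b : E) :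
    H (a + b) ≤ H a + H b := by
  have hmid := hconvex.2 (mem_univ a) (mem_univ b) (by norm_num : (0 : ℝ) ≤ 1 / 2)
    (by norm_num : (0 : ℝ) ≤ 1 / 2) (by norm_num)
  have hab : a + b = (2 : ℝ) • ((1 / 2 : ℝ) • a + (1 / 2 : ℝ) • b) := by
    rw [smul_add, smul_smul, smul_smul]
    norm_num
  rw [hab, hhom 2 two_pos]
  simp only [smul_eq_mul] at hmid
  linarith

theorem fderiv_apply_le_of_subadditive {E : Type*} [NormedAddCommGroup E] [NormedSpace ℝ E]
    {H : E → ℝ} (hsub : ∀ a b, H (a + b) ≤ H a + H b)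
    (hhom : ∀ t : ℝ, 0 < t → ∀ x, H (t • x) = t * H x) {z : E}
    (hz : DifferentiableAt ℝ H z) (w : E) :
    fderiv ℝ H z w ≤ H w := by
  set φ : ℝ → ℝ := fun t => H (z + t • w)
  have hline : HasDerivAt (fun t : ℝ => z + t • w) w 0 := by
    simpa using ((hasDerivAt_id (0 : ℝ)).smul_const w).const_add z
  have hH : HasFDerivAt H (fderiv ℝ H z) (z + (0 : ℝ) • w) := by simpa using hz.hasFDerivAt
  have hφ : HasDerivAt φ (fderiv ℝ H z w) 0 := hH.comp_hasDerivAt 0 hline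
  have hslope : ∀ t : ℝ, 0 < t → slope φ 0 t ≤ H w := by
    intro t ht
    have hφt : φ t ≤ φ 0 + t * H w := by
      simpa [φ, hhom t ht] using hsub z (t • w)
    rw [slope_def_field, sub_zero, div_le_iff₀ ht]
    linarith
  have htend : Tendsto (slope φ 0) (𝓝[>] 0) (𝓝 (fderiv ℝ H z w)) :=
    (hasDerivAt_iff_tendsto_slope.mp hφ).mono_left (nhdsWithin_mono 0 fun _ ht => ne_of_gt ht)
  exact le_of_tendsto htend (eventually_nhdsWithin_of_forall hslope)

theorem Real.mul_mul_rpow_sub_one_le {a b p : ℝ} (ha : 0 ≤ a) (hb : 0 ≤ b) (hp : 1 < p) :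
    p * (a * b ^ (p - 1)) ≤ a ^ p + (p - 1) * b ^ p := by
  have hp0 : 0 < p := by linarith
  have hp1 : p - 1 ≠ 0 := by linarith
  have hq : p.HolderConjugate (p / (p - 1)) := Real.HolderConjugate.conjExponent hp
  have hyoung := Real.young_inequality_of_nonneg ha (Real.rpow_nonneg hb (p - 1)) hq
  have hpow : (b ^ (p - 1)) ^ (p / (p - 1)) = b ^ p := by
    rw [← Real.rpow_mul hb]
    congr 1
    field_simp
  have hsum : a ^ p / p + b ^ p / (p / (p - 1)) = (a ^ p + (p - 1) * b ^ p) / p := by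
    field_simp
  rw [hpow, hsum, le_div_iff₀ hp0] at hyoung
  linarith

theorem stmt_10_general {n : ℕ} (H : EuclideanSpace ℝ (Fin n) → ℝ) (p : ℝ) (hp : 1 < p)
    (hnonneg : ∀ x, 0 ≤ H x)
    (hconvex : ConvexOn ℝ Set.univ H)
    (hhom : ∀ (t : ℝ) (x : EuclideanSpace ℝ (Fin n)), H (t • x) = |t| * H x)
    (hdiff : ∀ x : EuclideanSpace ℝ (Fin n), x ≠ 0 → DifferentiableAt ℝ H x)
    (u v : EuclideanSpace ℝ (Fin n) → ℝ)
    (hgv : ∀ x, gradient v x ≠ 0) :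
    ∀ x : EuclideanSpace ℝ (Fin n),
      0 ≤ H (gradient u x) ^ p
          + (p - 1) * H ((u x / v x) • gradient v x) ^ p
          - p * H ((u x / v x) • gradient v x) ^ (p - 1)
              * (inner ℝ (gradient H (gradient v x)) (gradient u x) : ℝ) := by
  intro x
  have hposhom : ∀ t : ℝ, 0 < t → ∀ y, H (t • y) = t * H y := fun t ht y => by
    rw [hhom, abs_of_pos ht]
  have hinner : inner ℝ (gradient H (gradient v x)) (gradient u x) ≤ H (gradient u x) := by
    rw [inner_gradient_left]
    exact fderiv_apply_le_of_subadditive (hconvex.map_add_le_of_pos_homogeneous hposhom) hposhom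
      (hdiff _ (hgv x)) _
  have hyoung := Real.mul_mul_rpow_sub_one_le (hnonneg (gradient u x))
    (hnonneg ((u x / v x) • gradient v x)) hp
  have hcoef : 0 ≤ p * H ((u x / v x) • gradient v x) ^ (p - 1) :=
    mul_nonneg (by linarith) (Real.rpow_nonneg (hnonneg _) _)
  nlinarith [mul_le_mul_of_nonneg_left hinner hcoef]

theorem stmt_10 {n : ℕ} (H : EuclideanSpace ℝ (Fin n) → ℝ) (p : ℝ) (hp : 1 < p)
    (hnonneg : ∀ x, 0 ≤ H x)
    (hpos : ∀ x : EuclideanSpace ℝ (Fin n), x ≠ 0 → 0 < H x)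
    (hconvex : ConvexOn ℝ Set.univ H)
    (hhom : ∀ (t : ℝ) (x : EuclideanSpace ℝ (Fin n)), H (t • x) = |t| * H x)
    (hdiff : ∀ x : EuclideanSpace ℝ (Fin n), x ≠ 0 → DifferentiableAt ℝ H x)
    (u v : EuclideanSpace ℝ (Fin n) → ℝ)
    (hu : ∀ x, 0 ≤ u x) (hv : ∀ x, 0 < v x)
    (hdu : Differentiable ℝ u) (hdv : Differentiable ℝ v)
    (hgv : ∀ x, gradient v x ≠ 0) :
    ∀ x : EuclideanSpace ℝ (Fin n),
      0 ≤ H (gradient u x) ^ p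
          + (p - 1) * H ((u x / v x) • gradient v x) ^ p
          - p * H ((u x / v x) • gradient v x) ^ (p - 1)
              * (inner ℝ (gradient H (gradient v x)) (gradient u x) : ℝ) :=
  stmt_10_general H p hp hnonneg hconvex hhom hdiff u v hgv
end

section
/- Let u, v : ℝⁿ → ℝ be differentiable with u ≥ 0 and v > 0, let p > 1, and let H : ℝⁿ → [0,∞) be C¹ away from 0, convex, absolutely 1-homogeneous, positive away from 0. Define R(u,v) = H(∇u)^p − ⟨H(∇v)^{p−1} ∇H(∇v), ∇(u^p / v^{p−1})⟩ and L(u,v) = H(∇u)^p + (p−1)H((u/v)∇v)^p − p H((u/v)∇v)^{p−1} ⟨∇H(∇v), ∇u⟩. Then R(u,v) = L(u,v) pointwise (wherever ∇v ≠ 0). -/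
/-!
By the chain and product rules, `∇(u^p / v^(p-1)) = p (u/v)^(p-1) ∇u - (p-1) (u/v)^p ∇v`.
Pairing this with `H(∇v)^(p-1) ∇H(∇v)`, the Euler identity `⟪∇H(ξ), ξ⟫ = H(ξ)` of the
1-homogeneous `H` and `H((u/v) ∇v) = (u/v) H(∇v)` turn the `∇v`-term into
`(p-1) H((u/v) ∇v)^p` and the `∇u`-term into `p H((u/v) ∇v)^(p-1) ⟪∇H(∇v), ∇u⟫`.
-/

open scoped RealInnerProductSpace

theorem fderiv_apply_self_of_pos_homogeneous {E F : Type*} [NormedAddCommGroup E]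
    [NormedSpace ℝ E] [NormedAddCommGroup F] [NormedSpace ℝ F] {H : E → F} {y : E}
    (hd : DifferentiableAt ℝ H y) (hhom : ∀ t : ℝ, 0 < t → H (t • y) = t • H y) :
    fderiv ℝ H y y = H y := by
  have hray : HasDerivAt (fun t : ℝ => H (t • y)) (fderiv ℝ H y y) 1 := by
    have hd' : HasFDerivAt H (fderiv ℝ H y) ((1 : ℝ) • y) := by
      rw [one_smul]; exact hd.hasFDerivAt
    have hsmul : HasDerivAt (fun t : ℝ => t • y) y 1 := by
      simpa using (hasDerivAt_id (1 : ℝ)).smul_const y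
    exact hd'.comp_hasDerivAt 1 hsmul
  have hlin : HasDerivAt (fun t : ℝ => H (t • y)) (H y) 1 := by
    have hsmul : HasDerivAt (fun t : ℝ => t • H y) (H y) 1 := by
      simpa using (hasDerivAt_id (1 : ℝ)).smul_const (H y)
    refine hsmul.congr_of_eventuallyEq ?_
    filter_upwards [eventually_gt_nhds one_pos] with t ht using hhom t ht
  exact hray.unique hlin

theorem inner_gradient_self_of_pos_homogeneous {F : Type*} [NormedAddCommGroup F]
    [InnerProductSpace ℝ F] [CompleteSpace F] {H : F → ℝ} {y : F}
    (hd : DifferentiableAt ℝ H y) (hhom : ∀ t : ℝ, 0 < t → H (t • y) = t * H y) :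
    ⟪gradient H y, y⟫ = H y := by
  rw [inner_gradient_left]
  exact fderiv_apply_self_of_pos_homogeneous hd hhom

theorem HasFDerivAt.rpow_div_rpow_sub_one {E : Type*} [NormedAddCommGroup E] [NormedSpace ℝ E]
    {u v : E → ℝ} {u' v' : E →L[ℝ] ℝ} {x : E} {p : ℝ}
    (hu : HasFDerivAt u u' x) (hv : HasFDerivAt v v' x) (hux : 0 ≤ u x) (hvx : 0 < v x)
    (hp : 1 ≤ p) :
    HasFDerivAt (fun y => u y ^ p / v y ^ (p - 1))
      ((p * (u x / v x) ^ (p - 1)) • u' - ((p - 1) * (u x / v x) ^ p) • v') x := by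
  have hvp : 0 < v x ^ (p - 1) := Real.rpow_pos_of_pos hvx _
  have hinv := (hasDerivAt_inv hvp.ne').comp_hasFDerivAt x (hv.rpow_const (Or.inl hvx.ne'))
  refine (((hu.rpow_const (Or.inr hp)).mul hinv).congr_fderiv ?_).congr_of_eventuallyEq
    (.of_forall fun y => div_eq_mul_inv _ _)
  have hup : u x ^ p = u x ^ (p - 1) * u x := by
    rw [← Real.rpow_add_one' hux (by linarith), sub_add_cancel]
  have hvp' : v x ^ p = v x ^ (p - 1) * v x := by
    rw [← Real.rpow_add_one hvx.ne', sub_add_cancel]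
  ext w
  simp only [add_apply, sub_apply, smul_apply, smul_eq_mul, Function.comp_apply]
  rw [Real.div_rpow hux hvx.le, Real.div_rpow hux hvx.le, Real.rpow_sub_one hvx.ne' (p - 1),
    hup, hvp']
  field_simp
  ring

theorem HasGradientAt.rpow_div_rpow_sub_one {F : Type*} [NormedAddCommGroup F]
    [InnerProductSpace ℝ F] [CompleteSpace F] {u v : F → ℝ} {u' v' x : F} {p : ℝ}
    (hu : HasGradientAt u u' x) (hv : HasGradientAt v v' x) (hux : 0 ≤ u x) (hvx : 0 < v x)
    (hp : 1 ≤ p) :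
    HasGradientAt (fun y => u y ^ p / v y ^ (p - 1))
      ((p * (u x / v x) ^ (p - 1)) • u' - ((p - 1) * (u x / v x) ^ p) • v') x := by
  rw [hasGradientAt_iff_hasFDerivAt] at *
  simpa using HasFDerivAt.rpow_div_rpow_sub_one hu hv hux hvx hp

theorem stmt_12_general {n : ℕ} (H : EuclideanSpace ℝ (Fin n) → ℝ) (p : ℝ) (hp : 1 < p)
    (hnonneg : ∀ x, 0 ≤ H x)
    (hhom : ∀ (t : ℝ) (x : EuclideanSpace ℝ (Fin n)), H (t • x) = |t| * H x)
    (hdiff : ∀ x : EuclideanSpace ℝ (Fin n), x ≠ 0 → DifferentiableAt ℝ H x)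
    (u v : EuclideanSpace ℝ (Fin n) → ℝ)
    (hu : ∀ x, 0 ≤ u x) (hv : ∀ x, 0 < v x)
    (hdu : Differentiable ℝ u) (hdv : Differentiable ℝ v) :
    ∀ x : EuclideanSpace ℝ (Fin n), gradient v x ≠ 0 →
      H (gradient u x) ^ p
        - (inner ℝ (H (gradient v x) ^ (p - 1) • gradient H (gradient v x))
            (gradient (fun y => u y ^ p / v y ^ (p - 1)) x) : ℝ)
      = H (gradient u x) ^ p
          + (p - 1) * H ((u x / v x) • gradient v x) ^ p
          - p * H ((u x / v x) • gradient v x) ^ (p - 1)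
              * (inner ℝ (gradient H (gradient v x)) (gradient u x) : ℝ) := by
  intro x hx
  have ha : 0 ≤ u x / v x := div_nonneg (hu x) (hv x).le
  have hquot := ((hdu x).hasGradientAt.rpow_div_rpow_sub_one (hdv x).hasGradientAt
    (hu x) (hv x) hp.le).gradient
  have heuler : ⟪gradient H (gradient v x), gradient v x⟫ = H (gradient v x) :=
    inner_gradient_self_of_pos_homogeneous (hdiff _ hx) fun t ht => by rw [hhom, abs_of_pos ht]
  have hscale : H ((u x / v x) • gradient v x) = u x / v x * H (gradient v x) := by
    rw [hhom, abs_of_nonneg ha]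
  have hHp : H (gradient v x) ^ p = H (gradient v x) ^ (p - 1) * H (gradient v x) := by
    rw [← Real.rpow_add_one' (hnonneg _) (by linarith), sub_add_cancel]
  rw [hquot, hscale, real_inner_smul_left, inner_sub_right, real_inner_smul_right,
    real_inner_smul_right, heuler, Real.mul_rpow ha (hnonneg _), Real.mul_rpow ha (hnonneg _), hHp]
  ring

theorem stmt_12 {n : ℕ} (H : EuclideanSpace ℝ (Fin n) → ℝ) (p : ℝ) (hp : 1 < p)
    (hnonneg : ∀ x, 0 ≤ H x)
    (hpos : ∀ x : EuclideanSpace ℝ (Fin n), x ≠ 0 → 0 < H x)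
    (hconvex : ConvexOn ℝ Set.univ H)
    (hhom : ∀ (t : ℝ) (x : EuclideanSpace ℝ (Fin n)), H (t • x) = |t| * H x)
    (hdiff : ∀ x : EuclideanSpace ℝ (Fin n), x ≠ 0 → DifferentiableAt ℝ H x)
    (u v : EuclideanSpace ℝ (Fin n) → ℝ)
    (hu : ∀ x, 0 ≤ u x) (hv : ∀ x, 0 < v x)
    (hdu : Differentiable ℝ u) (hdv : Differentiable ℝ v) :
    ∀ x : EuclideanSpace ℝ (Fin n), gradient v x ≠ 0 →
      H (gradient u x) ^ p
        - (inner ℝ (H (gradient v x) ^ (p - 1) • gradient H (gradient v x))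
            (gradient (fun y => u y ^ p / v y ^ (p - 1)) x) : ℝ)
      = H (gradient u x) ^ p
          + (p - 1) * H ((u x / v x) • gradient v x) ^ p
          - p * H ((u x / v x) • gradient v x) ^ (p - 1)
              * (inner ℝ (gradient H (gradient v x)) (gradient u x) : ℝ) :=
  stmt_12_general H p hp hnonneg hhom hdiff u v hu hv hdu hdv
end
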